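/- Let x, y, δ, s be positive integers with y > x ≥ s + δ and s ≥ δ + 1. Then ρ(K_{x,y} \ E(K_{δ,y−δ})) > ρ(K_{x,y} \ E(K_{s,y−s})). -/

import Mathlib

/-- `K_{x,y}` minus the edges between the first `s` vertices of the `x`-side and
the first `r` vertices of the `y`-side. -/
def KBipMinus (x y s r : ℕ) : SimpleGraph (Fin x ⊕ Fin y) where
  Adj u v :=
    match u, v with
    | .inl i, .inr j => ¬(i.val < s ∧ j.val < r)
    | .inr j, .inl i => ¬(i.val < s ∧ j.val < r)
    | _, _ => False
  symm := ⟨by rintro (i | i) (j | j) h <;> simp at h ⊢ <;> exact h⟩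
  loopless := ⟨by rintro (i | i) h <;> simp at h⟩

/-- adjacency spectral radius of a finite graph -/
noncomputable def specRad {V : Type*} [Fintype V] [DecidableEq V] (G : SimpleGraph V) : ℝ := by
  classical exact sSup (spectrum ℝ (G.adjMatrix ℝ))

open Finset Matrix


lemma perron_sSup {n : Type*} [Fintype n] [DecidableEq n] [Nonempty n]
    (A : Matrix n n ℝ) (hsymm : A.IsSymm) (hnn : ∀ i j, 0 ≤ A i j)
    (v : n → ℝ) (hv : ∀ i, 0 < v i) (l : ℝ) (heig : A *ᵥ v = l • v) :
    sSup (spectrum ℝ A) = l := by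
  have hvne : v ≠ 0 := by
    intro h
    have := hv (Classical.arbitrary n)
    rw [h] at this; simp at this
  have hmem : l ∈ spectrum ℝ A := by
    rw [spectrum.mem_iff]
    intro hu
    have hdet := (Matrix.isUnit_iff_isUnit_det _).mp hu
    have h0 : (algebraMap ℝ (Matrix n n ℝ) l - A).det = 0 := by
      rw [← Matrix.exists_mulVec_eq_zero_iff]
      refine ⟨v, hvne, ?_⟩
      rw [Matrix.sub_mulVec, Algebra.algebraMap_eq_smul_one, Matrix.smul_mulVec,
        Matrix.one_mulVec, heig, sub_self]
    rw [h0] at hdet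
    simp at hdet
  have hub : ∀ μ ∈ spectrum ℝ A, μ ≤ l := by
    intro μ hμ
    rw [spectrum.mem_iff] at hμ
    have hdet : (algebraMap ℝ (Matrix n n ℝ) μ - A).det = 0 := by
      by_contra h
      exact hμ ((Matrix.isUnit_iff_isUnit_det _).mpr (isUnit_iff_ne_zero.mpr h))
    obtain ⟨w, hw0, hww⟩ := Matrix.exists_mulVec_eq_zero_iff.mpr hdet
    have hAw : A *ᵥ w = μ • w := by
      rw [Matrix.sub_mulVec, Algebra.algebraMap_eq_smul_one, Matrix.smul_mulVec,
        Matrix.one_mulVec, sub_eq_zero] at hww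
      exact hww.symm
    set u : n → ℝ := fun i => |w i| with hu
    have key : ∀ i, μ * u i ≤ (A *ᵥ u) i := by
      intro i
      calc μ * u i ≤ |μ| * |w i| :=
            mul_le_mul_of_nonneg_right (le_abs_self μ) (abs_nonneg _)
        _ = |(A *ᵥ w) i| := by rw [hAw]; simp [abs_mul]
        _ ≤ ∑ j, A i j * |w j| := by
            rw [Matrix.mulVec, dotProduct]
            refine (Finset.abs_sum_le_sum_abs _ _).trans (le_of_eq ?_)
            exact Finset.sum_congr rfl fun j _ => by rw [abs_mul, abs_of_nonneg (hnn i j)]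
        _ = (A *ᵥ u) i := rfl
    obtain ⟨i0, hi0⟩ := Function.ne_iff.mp hw0
    have hS : 0 < ∑ i, v i * u i := by
      refine Finset.sum_pos' (fun i _ => mul_nonneg (hv i).le (abs_nonneg _)) ?_
      exact ⟨i0, Finset.mem_univ _, mul_pos (hv i0) (abs_pos.mpr hi0)⟩
    have swap : ∑ i, v i * (A *ᵥ u) i = ∑ j, (A *ᵥ v) j * u j := by
      simp only [Matrix.mulVec, dotProduct, Finset.mul_sum, Finset.sum_mul]
      rw [Finset.sum_comm]
      refine Finset.sum_congr rfl fun j _ => Finset.sum_congr rfl fun i _ => ?_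
      rw [← hsymm.apply i j]
      ring
    have main : μ * ∑ i, v i * u i ≤ l * ∑ i, v i * u i := by
      calc μ * ∑ i, v i * u i = ∑ i, v i * (μ * u i) := by
            rw [Finset.mul_sum]; exact Finset.sum_congr rfl fun i _ => by ring
        _ ≤ ∑ i, v i * (A *ᵥ u) i :=
            Finset.sum_le_sum fun i _ => mul_le_mul_of_nonneg_left (key i) (hv i).le
        _ = ∑ j, (A *ᵥ v) j * u j := swap
        _ = l * ∑ i, v i * u i := by
            rw [heig, Finset.mul_sum]
            exact Finset.sum_congr rfl fun i _ => by simp [mul_assoc]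
    exact le_of_mul_le_mul_right main hS
  exact IsGreatest.csSup_eq ⟨hmem, hub⟩


lemma sum_ite_range (y k : ℕ) (hk : k ≤ y) (c d : ℝ) :
    ∑ j ∈ Finset.range y, (if j < k then c else d) = k * c + (y - k : ℕ) * d := by
  rw [Finset.range_eq_Ico, ← Finset.sum_Ico_consecutive _ (Nat.zero_le k) hk]
  have h1 : ∑ j ∈ Finset.Ico 0 k, (if j < k then c else d) = k * c := by
    rw [Finset.sum_congr rfl fun j hj => if_pos (Finset.mem_Ico.mp hj).2]
    simp [mul_comm]
  have h2 : ∑ j ∈ Finset.Ico k y, (if j < k then c else d) = (y - k : ℕ) * d := by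
    rw [Finset.sum_congr rfl fun j hj => if_neg (by
      have := (Finset.mem_Ico.mp hj).1; omega)]
    simp [mul_comm]
  rw [h1, h2]


noncomputable def muR (x y t : ℝ) : ℝ :=
  ((t^2 + (x-t)*y) + Real.sqrt ((t^2 + (x-t)*y)^2 - 4*(t^2*(x-t)*(y-t)))) / 2

lemma muR_disc_nonneg (x y t : ℝ) (ht : 1 ≤ t) (htx : t < x) :
    0 ≤ (t^2 + (x-t)*y)^2 - 4*(t^2*(x-t)*(y-t)) := by
  nlinarith [sq_nonneg (t^2 - (x-t)*y), mul_pos (pow_pos (lt_of_lt_of_le one_pos ht) 3) (sub_pos.mpr htx)]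

lemma muR_root (x y t : ℝ) (ht : 1 ≤ t) (htx : t < x) :
    (muR x y t)^2 - (t^2+(x-t)*y) * muR x y t + t^2*(x-t)*(y-t) = 0 := by
  have hd := muR_disc_nonneg x y t ht htx
  have hs := Real.sq_sqrt hd
  unfold muR
  linear_combination hs / 4

/-- if `g(m) < 0` then `m < muR` -/
lemma muR_gt (x y t m : ℝ) (ht : 1 ≤ t) (htx : t < x)
    (h : m^2 - (t^2+(x-t)*y)*m + t^2*(x-t)*(y-t) < 0) : m < muR x y t := by
  have hd := muR_disc_nonneg x y t ht htx
  have h1 : (2*m - (t^2 + (x-t)*y))^2 < (t^2 + (x-t)*y)^2 - 4*(t^2*(x-t)*(y-t)) := by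
    nlinarith
  have h2 : |2*m - (t^2 + (x-t)*y)| < Real.sqrt ((t^2 + (x-t)*y)^2 - 4*(t^2*(x-t)*(y-t))) := by
    rw [← Real.sqrt_sq_eq_abs]
    exact Real.sqrt_lt_sqrt (sq_nonneg _) h1
  have h3 := (le_abs_self (2*m - (t^2 + (x-t)*y))).trans h2.le
  unfold muR
  nlinarith [h2, le_abs_self (2*m - (t^2 + (x-t)*y))]

lemma muR_gt_sq (x y t : ℝ) (ht : 1 ≤ t) (htx : t < x) : t^2 < muR x y t := by
  refine muR_gt x y t _ ht htx ?_
  nlinarith [mul_pos (pow_pos (lt_of_lt_of_le one_pos ht) 3) (sub_pos.mpr htx)]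

lemma muR_gt_xy (x y t : ℝ) (ht : 1 ≤ t) (htx : t < x) : (x-t)*y < muR x y t := by
  refine muR_gt x y t _ ht htx ?_
  nlinarith [mul_pos (pow_pos (lt_of_lt_of_le one_pos ht) 3) (sub_pos.mpr htx)]

/-- if `m > g`'s vertex and `g(m) > 0` then `muR < m` -/
lemma muR_lt (x y t m : ℝ) (hvert : t^2 + (x-t)*y < 2*m)
    (h : 0 < m^2 - (t^2+(x-t)*y)*m + t^2*(x-t)*(y-t)) : muR x y t < m := by
  have h1 : (t^2 + (x-t)*y)^2 - 4*(t^2*(x-t)*(y-t)) < (2*m - (t^2 + (x-t)*y))^2 := by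
    nlinarith
  have h2 : Real.sqrt ((t^2 + (x-t)*y)^2 - 4*(t^2*(x-t)*(y-t))) < 2*m - (t^2 + (x-t)*y) := by
    rcases le_or_gt ((t^2 + (x-t)*y)^2 - 4*(t^2*(x-t)*(y-t))) 0 with hd | hd
    · rw [Real.sqrt_eq_zero_of_nonpos hd]; linarith
    · calc Real.sqrt _ < Real.sqrt ((2*m - (t^2 + (x-t)*y))^2) := Real.sqrt_lt_sqrt hd.le h1
        _ = |2*m - (t^2 + (x-t)*y)| := Real.sqrt_sq_eq_abs _
        _ = 2*m - (t^2 + (x-t)*y) := abs_of_pos (by linarith)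
  unfold muR
  linarith

lemma Ppos (a c d e : ℝ) (ha : 0 < a) (hc : 0 ≤ c) (hd : 0 < d) (he : 0 < e) :
    0 < a*d*e^2 + 3*a*d^2*e + a*c*e^2 + 6*a*c*d*e + 4*a*c*d^2 + 2*a*c^2*e + 5*a*c^2*d + a*c^3
      + a^2*e^2 + 4*a^2*d*e + 4*a^2*c*e + 5*a^2*c*d + 3*a^2*c^2 + a^3*e + a^3*c := by
  have h1 : 0 < a*d*e^2 := mul_pos (mul_pos ha hd) (pow_pos he 2)
  have ha' := ha.le
  have hd' := hd.le
  have he' := he.le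
  have n2 : 0 ≤ 3*a*d^2*e := by positivity
  nlinarith [mul_nonneg (mul_nonneg ha' hc) (mul_nonneg hd' he'),
    mul_nonneg (mul_nonneg ha' hc) (sq_nonneg e), mul_nonneg (mul_nonneg ha' hc) (sq_nonneg d),
    mul_nonneg (mul_nonneg ha' (mul_nonneg hc hc)) he', mul_nonneg (mul_nonneg ha' (mul_nonneg hc hc)) hd',
    mul_nonneg ha' (mul_nonneg (mul_nonneg hc hc) hc),
    mul_nonneg (mul_nonneg ha' ha') (sq_nonneg e), mul_nonneg (mul_nonneg (mul_nonneg ha' ha') hd') he',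
    mul_nonneg (mul_nonneg (mul_nonneg ha' ha') hc) he', mul_nonneg (mul_nonneg (mul_nonneg ha' ha') hc) hd',
    mul_nonneg (mul_nonneg ha' ha') (mul_nonneg hc hc),
    mul_nonneg (mul_nonneg (mul_nonneg ha' ha') ha') he',
    mul_nonneg (mul_nonneg (mul_nonneg ha' ha') ha') hc,
    mul_nonneg (mul_nonneg (mul_nonneg ha' hd') hd') he']
set_option maxHeartbeats 2000000 in
lemma specRad_KBipMinus (x y t : ℕ) (ht : 1 ≤ t) (htx : t < x) (hxy : x < y) :
    specRad (KBipMinus x y t (y - t)) = Real.sqrt (muR x y t) := by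
  classical
  have hty : t ≤ y := (htx.trans hxy).le
  have htr : (1:ℝ) ≤ (t:ℝ) := by exact_mod_cast ht
  have htxr : (t:ℝ) < (x:ℝ) := by exact_mod_cast htx
  have hxyr : (x:ℝ) < (y:ℝ) := by exact_mod_cast hxy
  have hxt : (0:ℝ) < (x:ℝ) - t := sub_pos.mpr htxr
  set μ := muR x y t with hμdef
  have hroot := muR_root x y t htr htxr
  have hμt : (t:ℝ)^2 < μ := muR_gt_sq x y t htr htxr
  have hμpos : 0 < μ := by nlinarith
  set l := Real.sqrt μ with hldef
  have hl2 : l^2 = μ := Real.sq_sqrt hμpos.le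
  have hlpos : 0 < l := Real.sqrt_pos.mpr hμpos
  have hlne : l ≠ 0 := hlpos.ne'
  have hlmu : l * l = μ := by nlinarith [hl2]
  have hmpos : 0 < μ - (t:ℝ)^2 := by linarith
  have hmne : μ - (t:ℝ)^2 ≠ 0 := hmpos.ne'
  set a : ℝ := (t:ℝ)*((x:ℝ)-t)/(μ - (t:ℝ)^2) with hadef
  set c : ℝ := ((x:ℝ)-t)/l with hcdef
  set d : ℝ := l*((x:ℝ)-t)/(μ - (t:ℝ)^2) with hddef
  have hapos : 0 < a := div_pos (mul_pos (by linarith) hxt) hmpos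
  have hcpos : 0 < c := div_pos hxt hlpos
  have hdpos : 0 < d := div_pos (mul_pos hlpos hxt) hmpos
  set G := KBipMinus x y t (y - t) with hGdef
  set v : Fin x ⊕ Fin y → ℝ :=
    Sum.elim (fun i : Fin x => if i.val < t then a else 1)
      (fun j : Fin y => if j.val < y - t then c else d) with hvdef
  have hIJ : ∀ (i : Fin x) (b : Fin y),
      G.Adj (Sum.inl i) (Sum.inr b) ↔ ¬(i.val < t ∧ b.val < y - t) := fun i b => Iff.rfl
  have hJI : ∀ (b : Fin y) (i : Fin x),
      G.Adj (Sum.inr b) (Sum.inl i) ↔ ¬(i.val < t ∧ b.val < y - t) := fun b i => Iff.rfl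
  have hII : ∀ (i p : Fin x), ¬ G.Adj (Sum.inl i) (Sum.inl p) := fun i p h => h
  have hJJ : ∀ (j b : Fin y), ¬ G.Adj (Sum.inr j) (Sum.inr b) := fun j b h => h
  have hcast : ((y - t : ℕ) : ℝ) = (y:ℝ) - t := by
    push_cast [Nat.cast_sub hty]; ring
  have hcastx : ((x - t : ℕ) : ℝ) = (x:ℝ) - t := by
    push_cast [Nat.cast_sub htx.le]; ring
  have hne : Nonempty (Fin x ⊕ Fin y) :=
    ⟨Sum.inl ⟨0, lt_of_le_of_lt (Nat.zero_le t) htx⟩⟩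
  have heig : G.adjMatrix ℝ *ᵥ v = l • v := by
    funext u
    have hsmul : (l • v) u = l * v u := rfl
    rcases u with i | j
    · rw [Matrix.mulVec, dotProduct, Fintype.sum_sum_type, hsmul]
      have h1 : ∀ p : Fin x,
          G.adjMatrix ℝ (Sum.inl i) (Sum.inl p) * v (Sum.inl p) = 0 := by
        intro p
        rw [SimpleGraph.adjMatrix_apply, if_neg (hII i p), zero_mul]
      rw [Finset.sum_congr rfl fun p _ => h1 p, Finset.sum_const, smul_zero, zero_add]
      by_cases hi : i.val < t
      · have h2 : ∀ b : Fin y,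
            G.adjMatrix ℝ (Sum.inl i) (Sum.inr b) * v (Sum.inr b)
              = (fun j : ℕ => if j < y - t then (0:ℝ) else d) b.val := by
          intro b
          rw [SimpleGraph.adjMatrix_apply]
          by_cases hb : b.val < y - t
          · rw [if_neg (fun h => (hIJ i b).mp h ⟨hi, hb⟩), zero_mul]
            simp [hb]
          · rw [if_pos ((hIJ i b).mpr (fun hh => hb hh.2)), one_mul, hvdef]
            simp [hb]
        rw [Finset.sum_congr rfl fun b _ => h2 b,
          Fin.sum_univ_eq_sum_range (fun j : ℕ => if j < y - t then (0:ℝ) else d) y,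
          sum_ite_range y (y-t) (Nat.sub_le y t) 0 d]
        have hyy : y - (y - t) = t := by omega
        rw [hyy, hvdef]
        simp only [Sum.elim_inl, if_pos hi]
        rw [hadef, hddef]
        field_simp
        ring
      · have h2 : ∀ b : Fin y,
            G.adjMatrix ℝ (Sum.inl i) (Sum.inr b) * v (Sum.inr b)
              = (fun j : ℕ => if j < y - t then c else d) b.val := by
          intro b
          rw [SimpleGraph.adjMatrix_apply,
            if_pos ((hIJ i b).mpr (fun hh => hi hh.1)), one_mul, hvdef]
          simp
        rw [Finset.sum_congr rfl fun b _ => h2 b,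
          Fin.sum_univ_eq_sum_range (fun j : ℕ => if j < y - t then c else d) y,
          sum_ite_range y (y-t) (Nat.sub_le y t) c d]
        have hyy : y - (y - t) = t := by omega
        rw [hyy, hvdef]
        simp only [Sum.elim_inl, if_neg hi, mul_one]
        rw [hcdef, hddef, hcast]
        have e1 : ((y:ℝ) - t) * (((x:ℝ) - t) / l) + (t:ℝ) * (l * ((x:ℝ) - t) / (μ - (t:ℝ) ^ 2))
            = (((y:ℝ) - t) * ((x:ℝ) - t) * (μ - (t:ℝ)^2) + (t:ℝ) * (l * l) * ((x:ℝ) - t))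
              / (l * (μ - (t:ℝ)^2)) := by
          field_simp
        have e2 : ((y:ℝ) - t) * ((x:ℝ) - t) * (μ - (t:ℝ)^2) + (t:ℝ) * (l * l) * ((x:ℝ) - t)
            = (l*l) * (μ - (t:ℝ)^2) := by
          rw [hlmu]; linear_combination -hroot
        rw [e1, e2, div_eq_iff (mul_ne_zero hlne hmne)]
        ring
    · rw [Matrix.mulVec, dotProduct, Fintype.sum_sum_type, hsmul]
      have h1 : ∀ b : Fin y,
          G.adjMatrix ℝ (Sum.inr j) (Sum.inr b) * v (Sum.inr b) = 0 := by
        intro b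
        rw [SimpleGraph.adjMatrix_apply, if_neg (hJJ j b), zero_mul]
      rw [Finset.sum_congr rfl fun b _ => h1 b, Finset.sum_const, smul_zero, add_zero]
      by_cases hj : j.val < y - t
      · have h2 : ∀ p : Fin x,
            G.adjMatrix ℝ (Sum.inr j) (Sum.inl p) * v (Sum.inl p)
              = (fun i : ℕ => if i < t then (0:ℝ) else 1) p.val := by
          intro p
          rw [SimpleGraph.adjMatrix_apply]
          by_cases hp : p.val < t
          · rw [if_neg (fun h => (hJI j p).mp h ⟨hp, hj⟩), zero_mul]
            simp [hp]
          · rw [if_pos ((hJI j p).mpr (fun hh => hp hh.1)), one_mul, hvdef]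
            simp [hp]
        rw [Finset.sum_congr rfl fun p _ => h2 p,
          Fin.sum_univ_eq_sum_range (fun i : ℕ => if i < t then (0:ℝ) else 1) x,
          sum_ite_range x t htx.le 0 1]
        rw [hvdef]
        simp only [Sum.elim_inr, if_pos hj]
        rw [hcdef, hcastx]
        field_simp
        ring
      · have h2 : ∀ p : Fin x,
            G.adjMatrix ℝ (Sum.inr j) (Sum.inl p) * v (Sum.inl p)
              = (fun i : ℕ => if i < t then a else 1) p.val := by
          intro p
          rw [SimpleGraph.adjMatrix_apply,
            if_pos ((hJI j p).mpr (fun hh => hj hh.2)), one_mul, hvdef]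
          simp
        rw [Finset.sum_congr rfl fun p _ => h2 p,
          Fin.sum_univ_eq_sum_range (fun i : ℕ => if i < t then a else 1) x,
          sum_ite_range x t htx.le a 1]
        rw [hvdef]
        simp only [Sum.elim_inr, if_neg hj]
        rw [hcastx, hadef, hddef, mul_one]
        rw [← sub_eq_zero]
        have e3 : (t:ℝ) * ((t:ℝ) * ((x:ℝ) - t) / (μ - (t:ℝ) ^ 2)) + ((x:ℝ) - t)
              - l * (l * ((x:ℝ) - t) / (μ - (t:ℝ) ^ 2))
            = (((t:ℝ) * t - l * l) * ((x:ℝ) - t) + ((x:ℝ) - t) * (μ - (t:ℝ)^2))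
              / (μ - (t:ℝ)^2) := by
          field_simp
          ring
        rw [e3, div_eq_zero_iff]
        left
        linear_combination (-((x:ℝ) - t)) * hlmu
  have hv : ∀ u, 0 < v u := by
    rintro (i | j) <;> rw [hvdef]
    · simp only [Sum.elim_inl]
      split_ifs
      · exact hapos
      · exact one_pos
    · simp only [Sum.elim_inr]
      split_ifs
      · exact hcpos
      · exact hdpos
  have hnn : ∀ u w, 0 ≤ G.adjMatrix ℝ u w := by
    intro u w
    rw [SimpleGraph.adjMatrix_apply]
    split_ifs <;> norm_num
  rw [specRad]
  exact perron_sSup (G.adjMatrix ℝ) (SimpleGraph.isSymm_adjMatrix G) hnn v hv l heig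

set_option maxHeartbeats 1000000 in
/-- Lemma 3.4: for positive integers with `y > x ≥ s + δ` and `s ≥ δ + 1`,
`ρ(K_{x,y} \\ E(K_{δ,y-δ})) > ρ(K_{x,y} \\ E(K_{s,y-s}))`. -/
theorem stmt6 (x y δ s : ℕ) (hδ : 0 < δ) (hs : δ + 1 ≤ s) (hx : s + δ ≤ x) (hy : x < y) :
    specRad (KBipMinus x y s (y - s)) < specRad (KBipMinus x y δ (y - δ)) := by
  have h1 := specRad_KBipMinus x y s (by omega) (by omega) hy
  have h2 := specRad_KBipMinus x y δ (by omega) (by omega) hy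
  rw [h1, h2]
  have hδ1 : (1:ℝ) ≤ (δ:ℝ) := by exact_mod_cast hδ
  have hsδ : (δ:ℝ) + 1 ≤ (s:ℝ) := by exact_mod_cast hs
  have hxs : (s:ℝ) + δ ≤ (x:ℝ) := by exact_mod_cast hx
  have hyx : (x:ℝ) + 1 ≤ (y:ℝ) := by exact_mod_cast hy
  have hs1 : (1:ℝ) ≤ (s:ℝ) := by linarith
  have hsx : (s:ℝ) < (x:ℝ) := by linarith
  have hδx : (δ:ℝ) < (x:ℝ) := by linarith
  have hsnn : (0:ℝ) ≤ muR x y s := by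
    have := muR_gt_sq x y s hs1 hsx
    nlinarith
  refine Real.sqrt_lt_sqrt hsnn ?_
  set A := muR (x:ℝ) (y:ℝ) (δ:ℝ) with hAdef
  have rootδ := muR_root x y δ hδ1 hδx
  have hA : ((x:ℝ)-δ)*y < A := muR_gt_xy x y δ hδ1 hδx
  refine muR_lt x y s A ?_ ?_
  · nlinarith [hA]
  · have hcoef : (0:ℝ) < ((s:ℝ)-δ)*((y:ℝ)-s-δ) := by
      apply mul_pos <;> linarith
    have hc := mul_lt_mul_of_pos_left hA hcoef
    have hP : (0:ℝ) < ((s:ℝ)-δ)*((y:ℝ)-s-δ)*(((x:ℝ)-δ)*y)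
        + (s:ℝ)^2*((x:ℝ)-s)*((y:ℝ)-s) - (δ:ℝ)^2*((x:ℝ)-δ)*((y:ℝ)-δ) := by
      have h := Ppos ((s:ℝ)-δ) ((x:ℝ)-s-δ) (δ:ℝ) ((y:ℝ)-x)
        (by linarith) (by linarith) (by linarith) (by linarith)
      nlinarith [h]
    nlinarith [rootδ, hc, hP]
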